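/- arXiv:2009.05963 — 10 statements merged into one kernel-verified Lean document; each statement's English description precedes it below -/
import Mathlib

section
/- Let f, g : E → E be affine maps with linear parts f̄, ḡ. Assume T : V → V is a linear automorphism satisfying T ∘ f̄ = ḡ ∘ T, and assume there exist points A, B ∈ E such that T(f(A) -ᵥ A) = g(B) -ᵥ B. Then there exists an affine automorphism h : E → E such that h ∘ f ∘ h⁻¹ = g and the linear part of h equals T; in particular f and g are similar. -/
/-- If `T : V ≃ₗ V` intertwines the linear parts of `f` and `g`
(`T ∘ f.linear = g.linear ∘ T`) and there are points `A B : E` with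
`T (f A -ᵥ A) = g B -ᵥ B`, then there is an affine automorphism `h` with
`h ∘ f ∘ h⁻¹ = g` and linear part `T`; in particular `f` and `g` are similar. -/
theorem exists_affine_conjugation
    {F V E : Type*} [Field F] [AddCommGroup V] [Module F V] [AddTorsor V E]
    (f g : E →ᵃ[F] E) (T : V ≃ₗ[F] V)
    (hT : T.toLinearMap ∘ₗ f.linear = g.linear ∘ₗ T.toLinearMap)
    (hAB : ∃ A B : E, T (f A -ᵥ A) = g B -ᵥ B) :
    ∃ h : E ≃ᵃ[F] E, (∀ X : E, h (f (h.symm X)) = g X) ∧ h.linear = T := by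
  obtain ⟨A, B, hAB⟩ := hAB
  set h : E ≃ᵃ[F] E := AffineEquiv.mk' (fun X => T (X -ᵥ A) +ᵥ B) T A (by simp) with hh
  have key : ∀ Y : E, h (f Y) = g (h Y) := by
    intro Y
    have hT' : T (f.linear (Y -ᵥ A)) = g.linear (T (Y -ᵥ A)) :=
      congrFun (congrArg DFunLike.coe hT) (Y -ᵥ A)
    show T (f Y -ᵥ A) +ᵥ B = g (T (Y -ᵥ A) +ᵥ B)
    rw [AffineMap.map_vadd]
    have : f Y -ᵥ A = f.linear (Y -ᵥ A) + (f A -ᵥ A) := by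
      rw [f.linearMap_vsub, vsub_add_vsub_cancel]
    rw [this, map_add, hT', hAB, ← hT']
    rw [add_vadd, vsub_vadd]
  refine ⟨h, fun X => ?_, rfl⟩
  simpa using key (h.symm X)
end

section
/- Let f, g : E → E be affine maps with linear parts f̄, ḡ. Then f and g are similar if and only if there exists a linear automorphism T : V → V such that T ∘ f̄ ∘ T⁻¹ = ḡ and T maps the trajectory coset tc(f) onto the trajectory coset tc(g) (T '' tc(f) = tc(g)). -/
/-- The trajectory coset of an affine map `f : E → E`. -/
def trajectoryCoset {F V E : Type*} [Field F] [AddCommGroup V] [Module F V]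
    [AddTorsor V E] (f : E →ᵃ[F] E) : Set V :=
  Set.range fun B : E => f B -ᵥ B

private lemma affineEquiv_linear_vsub {F V E : Type*} [Field F] [AddCommGroup V] [Module F V]
    [AddTorsor V E] (e : E ≃ᵃ[F] E) (p q : E) : e.linear (p -ᵥ q) = e p -ᵥ e q := by
  simpa using e.toAffineMap.linearMap_vsub p q

/-- `f` and `g` are similar (affinely conjugate) iff there is a linear
automorphism `T` of `V` with `T ∘ f.linear ∘ T⁻¹ = g.linear` taking the trajectory
coset of `f` onto the trajectory coset of `g`. -/
theorem affine_similar_iff_linear_and_coset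
    {F V E : Type*} [Field F] [AddCommGroup V] [Module F V] [AddTorsor V E]
    (f g : E →ᵃ[F] E) :
    (∃ h : E ≃ᵃ[F] E, ∀ X : E, h (f (h.symm X)) = g X) ↔
      ∃ T : V ≃ₗ[F] V,
        T.toLinearMap ∘ₗ f.linear ∘ₗ T.symm.toLinearMap = g.linear ∧
        ⇑T '' trajectoryCoset f = trajectoryCoset g := by
  constructor
  · rintro ⟨h, hc⟩
    refine ⟨h.linear, ?_, ?_⟩
    · ext v
      obtain ⟨P⟩ := (inferInstance : Nonempty E)
      have key : h (f (h.symm (v +ᵥ P))) -ᵥ h (f (h.symm P)) = g (v +ᵥ P) -ᵥ g P := by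
        rw [hc, hc]
      simp only [LinearMap.comp_apply, LinearEquiv.coe_coe]
      calc h.linear (f.linear (h.symm.linear v))
          = h.linear (f.linear (h.symm.linear ((v +ᵥ P) -ᵥ P))) := by rw [vadd_vsub]
        _ = g (v +ᵥ P) -ᵥ g P := by
            rw [affineEquiv_linear_vsub, f.linearMap_vsub, affineEquiv_linear_vsub]
            exact key
        _ = g.linear v := by rw [← g.linearMap_vsub, vadd_vsub]
    · ext v
      constructor
      · rintro ⟨w, ⟨B, rfl⟩, rfl⟩
        refine ⟨h B, ?_⟩
        have hb : h (f B) = g (h B) := by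
          have := hc (h B); rwa [h.symm_apply_apply] at this
        show g (h B) -ᵥ h B = h.linear (f B -ᵥ B)
        rw [affineEquiv_linear_vsub, hb]
      · rintro ⟨X, rfl⟩
        refine ⟨f (h.symm X) -ᵥ h.symm X, ⟨h.symm X, rfl⟩, ?_⟩
        show h.linear _ = g X -ᵥ X
        rw [affineEquiv_linear_vsub, h.apply_symm_apply, hc]
  · rintro ⟨T, hT, himg⟩
    obtain ⟨P⟩ := (inferInstance : Nonempty E)
    have hgP : g P -ᵥ P ∈ ⇑T '' trajectoryCoset f := by rw [himg]; exact ⟨P, rfl⟩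
    obtain ⟨w, ⟨A, rfl⟩, hw⟩ := hgP
    have hTf : ∀ v : V, T (f.linear v) = g.linear (T v) := by
      intro v
      have := congrArg (· (T v)) hT
      simpa using this
    set h : E ≃ᵃ[F] E := AffineEquiv.mk' (fun X => T (X -ᵥ A) +ᵥ P) T A (by intro p'; simp)
    have hkey : ∀ Y : E, h (f Y) = g (h Y) := by
      intro Y
      show T (f Y -ᵥ A) +ᵥ P = g (T (Y -ᵥ A) +ᵥ P)
      rw [g.map_vadd]
      have : f Y -ᵥ A = f.linear (Y -ᵥ A) + (f A -ᵥ A) := by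
        rw [f.linearMap_vsub]
        exact (vsub_add_vsub_cancel _ _ _).symm
      rw [this, map_add, hTf, hw, add_vadd, vsub_vadd]
    refine ⟨h, fun X => ?_⟩
    rw [hkey, h.apply_symm_apply]
end

section
/- Let V be a vector space over a field F and L : V → V a linear map. Let α ∈ V satisfy (L - id_V)^n(α) = 0 for some n ∈ ℕ, and let β = Q(L)(α) for some polynomial Q ∈ F[X]. Then either β ∈ range(L - id_V), or there exists a polynomial R ∈ F[X] with R(L)(β) = α (so that α and β generate the same cyclic F[X]-submodule). -/
/-!
Write `e = Q(1)`. If `e = 0`, then `X - 1` divides `Q`, so `β = Q(L) α` lies in the range of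
`L - 1`. Otherwise `(X - 1)^n` and `Q` are coprime, and a Bézout identity `u (X - 1)^n + v Q = 1`
evaluated at `L` and applied to `α` gives `v(L) β = α`, because `(L - 1)^n` kills `α`.
-/

open Polynomial

namespace Polynomial

variable {R : Type*} [CommRing R]

theorem isCoprime_X_sub_C_of_isUnit_eval {Q : R[X]} {a : R} (h : IsUnit (Q.eval a)) :
    IsCoprime (X - C a) Q := by
  obtain ⟨S, hS⟩ := X_sub_C_dvd_sub_C_eval (p := Q) (a := a)
  rw [sub_eq_iff_eq_add'] at hS
  rw [hS]
  refine IsCoprime.add_mul_left_right ?_ S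
  exact ⟨0, C ↑h.unit⁻¹, by simp [← C_mul]⟩

variable {M : Type*} [AddCommGroup M] [Module R M] (L : Module.End R M)

theorem aeval_apply_mem_range_sub_of_isRoot {Q : R[X]} {a : R} (h : Q.IsRoot a) (v : M) :
    aeval L Q v ∈ LinearMap.range (L - algebraMap R _ a) := by
  obtain ⟨S, rfl⟩ := dvd_iff_isRoot.2 h
  exact ⟨aeval L S v, by simp [Module.End.mul_apply]⟩

theorem exists_aeval_aeval_eq_of_isCoprime {P Q : R[X]} (hPQ : IsCoprime P Q) {v : M}
    (hv : aeval L P v = 0) : ∃ S : R[X], aeval L S (aeval L Q v) = v := by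
  obtain ⟨u, w, huw⟩ := hPQ
  refine ⟨w, ?_⟩
  simpa [Module.End.mul_apply, hv] using congr($(congrArg (aeval L) huw) v)

end Polynomial

/-- If `(L - id)^n α = 0` and `β = Q(L) α` for some polynomial `Q`,
then either `β ∈ range (L - id)` or there is a polynomial `R` with `R(L) β = α`
(so `α` and `β` generate the same cyclic `F[X]`-submodule). -/
theorem cyclic_generator_or_in_range
    {F V : Type*} [Field F] [AddCommGroup V] [Module F V]
    (L : V →ₗ[F] V) (α : V) (n : ℕ)
    (hα : ((L - LinearMap.id : V →ₗ[F] V) ^ n) α = 0)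
    (Q : F[X]) (β : V) (hβ : β = Polynomial.aeval L Q α) :
    β ∈ LinearMap.range (L - LinearMap.id : V →ₗ[F] V) ∨
      ∃ R : F[X], Polynomial.aeval L R β = α := by
  subst hβ
  by_cases hQ : Q.IsRoot 1
  · exact .inl (by simpa using aeval_apply_mem_range_sub_of_isRoot L hQ α)
  · have hcop : IsCoprime ((X - C 1) ^ n) Q :=
      (isCoprime_X_sub_C_of_isUnit_eval (Ne.isUnit hQ)).pow_left
    exact .inr (exists_aeval_aeval_eq_of_isCoprime L hcop (by simpa [Module.End.one_eq_id] using hα))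
end

section
/- Let R be a ring and W a module over R. Let ε₁, ε₂, …, ε_m ∈ W and assume W is the internal direct sum of the cyclic submodules R·ε₁, R·ε₂, …, R·ε_m. Assume further that Ann(ε_i) ⊇ Ann(ε_m) for every i with 1 ≤ i ≤ m-1. Set ε'_m := ε₁ + ε₂ + … + ε_m. Then Ann(ε'_m) = Ann(ε_m), and W is the internal direct sum of R·ε₁, R·ε₂, …, R·ε_{m-1}, R·ε'_m. -/
theorem iSupIndep_iff_fun' {R W ι : Type*} [Ring R] [AddCommGroup W] [Module R W]
    [Fintype ι] [DecidableEq ι] (p : ι → Submodule R W) :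
    iSupIndep p ↔ ∀ x : ι → W, (∀ i, x i ∈ p i) → ∑ i, x i = 0 → ∀ i, x i = 0 := by
  classical
  constructor
  · intro h x hx hs i
    have hinj := h.dfinsupp_lsum_injective
    set v : Π₀ i, p i := DFinsupp.equivFunOnFintype.symm (fun i => ⟨x i, hx i⟩) with hvdef
    have hv : DFinsupp.lsum ℕ (fun i => (p i).subtype) v = 0 := by
      rw [DFinsupp.lsum_apply_apply, DFinsupp.sumAddHom_apply, DFinsupp.sum_eq_sum_fintype]
      · simp_rw [hvdef, Equiv.apply_symm_apply]
        simpa using hs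
      · intro i; simp
    have hv0 : v = 0 := hinj (by simpa using hv)
    have h2 := congrArg (fun f => (DFinsupp.equivFunOnFintype f i : W)) hv0
    simpa [hvdef, DFinsupp.equivFunOnFintype] using h2
  · intro h
    apply iSupIndep_of_dfinsupp_lsum_injective
    rw [injective_iff_map_eq_zero]
    intro v hv
    have hs : ∑ i, ((v i : W)) = 0 := by
      rw [DFinsupp.lsum_apply_apply, DFinsupp.sumAddHom_apply, DFinsupp.sum_eq_sum_fintype] at hv
      · simpa using hv
      · intro i; simp
    ext i
    exact congrArg Subtype.val (Subtype.ext (h (fun i => (v i : W)) (fun i => (v i).2) hs i) : v i = 0)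

/-- Let `W` be a module over a ring `R` which is the internal direct sum
of cyclic submodules `R·ε 0, …, R·ε m` (indexed by `Fin (m+1)`). If the annihilator
of each `ε i` (`i < m`) contains the annihilator of the last element `ε m`, then the
annihilator of `ε' := ε 0 + ⋯ + ε m` equals that of `ε m`, and `W` is also the
internal direct sum of `R·ε 0, …, R·ε (m-1), R·ε'` (i.e. with `ε m` replaced by `ε'`). -/
theorem replace_last_cyclic_generator
    {R W : Type*} [Ring R] [AddCommGroup W] [Module R W]
    (m : ℕ) (ε : Fin (m + 1) → W)
    (hindep : iSupIndep fun i => Submodule.span R {ε i})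
    (hsum : (⨆ i, Submodule.span R {ε i}) = ⊤)
    (hann : ∀ i : Fin m,
      {r : R | r • ε (Fin.last m) = 0} ⊆ {r : R | r • ε i.castSucc = 0}) :
    {r : R | r • (∑ i, ε i) = 0} = {r : R | r • ε (Fin.last m) = 0} ∧
    (iSupIndep fun i =>
        Submodule.span R {Function.update ε (Fin.last m) (∑ j, ε j) i}) ∧
    (⨆ i, Submodule.span R {Function.update ε (Fin.last m) (∑ j, ε j) i}) = ⊤ := by
  classical
  set u : Fin (m + 1) → W := Function.update ε (Fin.last m) (∑ j, ε j) with hu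
  have huc : ∀ j : Fin m, u j.castSucc = ε j.castSucc := fun j =>
    Function.update_of_ne (Fin.castSucc_lt_last j).ne _ _
  have hul : u (Fin.last m) = ∑ j, ε j := Function.update_self _ _ _
  have hmem : ∀ i, ε i ∈ Submodule.span R {ε i} := fun i =>
    Submodule.mem_span_singleton_self _
  have huniq := (iSupIndep_iff_fun' (fun i => Submodule.span R {ε i})).mp hindep
  have hzero : ∀ r : R, r • ε (Fin.last m) = 0 → ∀ i, r • ε i = 0 := by
    intro r hr i
    induction i using Fin.lastCases with
    | last => exact hr
    | cast j => exact hann j hr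
  have hann' : {r : R | r • (∑ i, ε i) = 0} = {r : R | r • ε (Fin.last m) = 0} := by
    ext r
    simp only [Set.mem_setOf_eq]
    constructor
    · intro h
      exact huniq (fun i => r • ε i)
        (fun i => Submodule.smul_mem _ _ (hmem i))
        (by rw [← Finset.smul_sum]; exact h) (Fin.last m)
    · intro h
      rw [Finset.smul_sum]
      exact Finset.sum_eq_zero fun i _ => hzero r h i
  refine ⟨hann', ?_, ?_⟩
  · -- independence of the new family
    rw [iSupIndep_iff_fun']
    intro x hx hs
    choose r hr using fun i => Submodule.mem_span_singleton.mp (hx i)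
    set s := r (Fin.last m) with hsdef
    have hxc : ∀ j : Fin m, x j.castSucc = r j.castSucc • ε j.castSucc := fun j => by
      rw [← hr, huc j]
    have hxl : x (Fin.last m) = s • ∑ j, ε j := by rw [← hr, hul]
    have hsum0 : ∑ j : Fin m, (r j.castSucc + s) • ε j.castSucc + s • ε (Fin.last m) = 0 := by
      calc ∑ j : Fin m, (r j.castSucc + s) • ε j.castSucc + s • ε (Fin.last m)
          = ∑ j : Fin m, (r j.castSucc • ε j.castSucc + s • ε j.castSucc)
              + s • ε (Fin.last m) := by simp_rw [add_smul]
        _ = ∑ j : Fin m, x j.castSucc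
              + (∑ j : Fin m, s • ε j.castSucc + s • ε (Fin.last m)) := by
            rw [Finset.sum_add_distrib]; simp_rw [hxc]; abel
        _ = ∑ j : Fin m, x j.castSucc + x (Fin.last m) := by
            rw [hxl, Finset.smul_sum, Fin.sum_univ_castSucc]
        _ = ∑ i, x i := (Fin.sum_univ_castSucc x).symm
        _ = 0 := hs
    set z : Fin (m + 1) → W :=
      Fin.lastCases (s • ε (Fin.last m)) (fun j => (r j.castSucc + s) • ε j.castSucc)
      with hz
    have hzc : ∀ j : Fin m, z j.castSucc = (r j.castSucc + s) • ε j.castSucc := fun j => by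
      simp [hz]
    have hzl : z (Fin.last m) = s • ε (Fin.last m) := by simp [hz]
    have hz0 : ∀ i, z i = 0 := by
      refine huniq z ?_ ?_
      · intro i
        induction i using Fin.lastCases with
        | last => rw [hzl]; exact Submodule.smul_mem _ _ (hmem _)
        | cast j => rw [hzc j]; exact Submodule.smul_mem _ _ (hmem _)
      · rw [Fin.sum_univ_castSucc]
        simp_rw [hzc, hzl]
        exact hsum0
    have hsl : s • ε (Fin.last m) = 0 := by rw [← hzl]; exact hz0 _
    have hse : ∀ i, s • ε i = 0 := hzero s hsl
    intro i
    induction i using Fin.lastCases with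
    | last =>
      rw [hxl, Finset.smul_sum]
      exact Finset.sum_eq_zero fun j _ => hse j
    | cast j =>
      have h1 : (r j.castSucc + s) • ε j.castSucc = 0 := by rw [← hzc]; exact hz0 _
      rw [add_smul, hse, add_zero] at h1
      rw [hxc j, h1]
  · -- the new family also spans
    rw [eq_top_iff, ← hsum]
    refine iSup_le fun i => ?_
    rw [Submodule.span_singleton_le_iff_mem]
    induction i using Fin.lastCases with
    | last =>
      have h1 : ε (Fin.last m) = u (Fin.last m) - ∑ j : Fin m, ε j.castSucc := by
        rw [hul, Fin.sum_univ_castSucc]; abel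
      rw [h1]
      refine sub_mem (Submodule.mem_iSup_of_mem (Fin.last m) ?_)
        (Submodule.sum_mem _ fun j _ => Submodule.mem_iSup_of_mem j.castSucc ?_)
      · exact Submodule.mem_span_singleton_self _
      · rw [huc j]; exact Submodule.mem_span_singleton_self _
    | cast j =>
      exact Submodule.mem_iSup_of_mem j.castSucc
        (by rw [huc j]; exact Submodule.mem_span_singleton_self _)
end

section
/- Let V be a finite-dimensional vector space over a field F and let L : V → V be a linear map. Then for every α ∈ V there exists α' ∈ V such that: α - α' ∈ range(L - id_V); α' lies in the generalized eigenspace maxGenEigenspace(L, 1); and the cyclic subspace ⟨α'⟩ = span_F{ Lⁿ(α') : n ∈ ℕ } admits an L-invariant complement in V, i.e. there is an L-invariant subspace W of V with ⟨α'⟩ ⊕ W = V. -/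
/-!
View `V` as a finitely generated torsion `F[X]`-module, `X` acting by `L`; by the structure
theorem it is `⨁ i, F[X] ⧸ (p i ^ e i)` with `p i` irreducible. On a summand with `p i` not
associated to `X - 1` the element `X - 1` acts invertibly, so that coordinate of `α` lies in
`(X - 1) V`; on the other summands a coordinate either lies in `(X - 1) V` or generates the
summand. Keeping only the generating coordinates gives `α'`. If `i₀` is such a coordinate of
largest exponent, every annihilator of `α' i₀` annihilates `α'`, so `span {α'}` is
complementary to the kernel of the `i₀`-th projection.
-/

open Polynomial Module Submodule
open scoped DirectSum

theorem LinearMap.isCompl_span_singleton_ker {R M N : Type*} [Ring R] [AddCommGroup M]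
    [Module R M] [AddCommGroup N] [Module R N] (f : M →ₗ[R] N) {a : M} (hgen : R ∙ f a = ⊤)
    (hann : ∀ s : R, s • f a = 0 → s • a = 0) : IsCompl (R ∙ a) (LinearMap.ker f) := by
  constructor
  · refine disjoint_def.mpr fun x hx hxf => ?_
    obtain ⟨s, rfl⟩ := mem_span_singleton.mp hx
    rw [LinearMap.mem_ker, map_smul] at hxf
    exact hann s hxf
  · rw [codisjoint_iff_le_sup]
    intro x _
    obtain ⟨s, hs⟩ := mem_span_singleton.mp (hgen ▸ mem_top : f x ∈ R ∙ f a)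
    refine mem_sup.mpr ⟨s • a, smul_mem _ s (mem_span_singleton_self a), x - s • a, ?_,
      add_sub_cancel _ _⟩
    rw [LinearMap.mem_ker, map_sub, map_smul, hs, sub_self]

section CyclicQuotient

variable {R : Type*} [CommRing R]

theorem Module.IsTorsionBy.exists_eq_smul_of_isCoprime {M : Type*} [AddCommGroup M] [Module R M]
    {π r : R} (hM : IsTorsionBy R M r) (h : IsCoprime π r) (x : M) : ∃ y, x = π • y := by
  obtain ⟨u, v, huv⟩ := h
  refine ⟨u • x, ?_⟩
  calc x = (u * π + v * r) • x := by rw [huv, one_smul]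
    _ = π • u • x := by rw [add_smul, mul_smul, mul_smul, hM, smul_zero, add_zero, smul_comm]

theorem Module.isTorsionBy_quotient_span_singleton (r : R) : IsTorsionBy R (R ⧸ R ∙ r) r :=
  (isTorsionBy_quotient_iff _ r).mpr fun x => mem_span_singleton.mpr ⟨x, mul_comm x r⟩

namespace Submodule.Quotient

theorem span_singleton_mk_eq_top_of_isCoprime {q r : R} (h : IsCoprime q r) :
    R ∙ (mk q : R ⧸ R ∙ r) = ⊤ := by
  obtain ⟨u, v, huv⟩ := h
  refine eq_top_iff'.mpr fun z => ?_
  induction z using induction_on with | H t => ?_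
  refine mem_span_singleton.mpr ⟨t * u, ?_⟩
  rw [← mk_smul, Quotient.eq, mem_span_singleton]
  exact ⟨-(t * v), by rw [smul_eq_mul, smul_eq_mul]; linear_combination (-t) * huv⟩

theorem smul_eq_zero_iff_dvd_of_span_singleton_eq_top {r s : R} {x : R ⧸ R ∙ r}
    (hx : R ∙ x = ⊤) : s • x = 0 ↔ r ∣ s := by
  constructor
  · intro hs
    obtain ⟨t, ht⟩ := mem_span_singleton.mp (hx ▸ mem_top : mk 1 ∈ R ∙ x)
    have : mk (s • 1) = (0 : R ⧸ R ∙ r) := by rw [mk_smul, ← ht, smul_comm, hs, smul_zero]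
    obtain ⟨c, hc⟩ := mem_span_singleton.mp ((mk_eq_zero _).mp this)
    rw [smul_eq_mul, smul_eq_mul, mul_one] at hc
    exact ⟨c, by rw [← hc, mul_comm]⟩
  · rintro ⟨c, rfl⟩
    rw [mul_comm, mul_smul, isTorsionBy_quotient_span_singleton r, smul_zero]

theorem exists_eq_smul_or_span_singleton_eq_top [IsPrincipalIdealRing R] {π p : R}
    (hπ : Irreducible π) (hp : Irreducible p) (e : ℕ) (x : R ⧸ R ∙ p ^ e) :
    (∃ y, x = π • y) ∨ (Associated p π ∧ R ∙ x = ⊤) := by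
  obtain ⟨q, rfl⟩ := mk_surjective _ x
  by_cases hpπ : Associated p π
  · by_cases hq : π ∣ q
    · obtain ⟨t, rfl⟩ := hq
      exact Or.inl ⟨mk t, by rw [← mk_smul, smul_eq_mul]⟩
    · exact Or.inr ⟨hpπ, span_singleton_mk_eq_top_of_isCoprime
        (hp.coprime_pow_of_not_dvd e fun h => hq (hpπ.symm.dvd.trans h))⟩
  · have hcop : IsCoprime π (p ^ e) :=
      (hp.coprime_iff_not_dvd.mpr fun h => hpπ (hp.associated_of_dvd hπ h)).symm.pow_right
    exact Or.inl ((isTorsionBy_quotient_span_singleton _).exists_eq_smul_of_isCoprime hcop _)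

end Submodule.Quotient

end CyclicQuotient

namespace DirectSum

open Submodule.Quotient

variable {R ι : Type*} [CommRing R] {p : ι → R} {e : ι → ℕ} {π : R}

theorem exists_sub_eq_smul_and_forall_eq_zero_or_span_singleton_eq_top [Fintype ι]
    [IsPrincipalIdealRing R] (hπ : Irreducible π) (hp : ∀ i, Irreducible (p i))
    (a : ⨁ i, R ⧸ R ∙ p i ^ e i) :
    ∃ a' : ⨁ i, R ⧸ R ∙ p i ^ e i, (∃ m, a - a' = π • m) ∧
      ∀ i, a' i = 0 ∨ (Associated (p i) π ∧ R ∙ a' i = ⊤) := by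
  have hcoord : ∀ i, ∃ b y, a i - b = π • y ∧ (b = 0 ∨ (Associated (p i) π ∧ R ∙ b = ⊤)) := by
    intro i
    rcases exists_eq_smul_or_span_singleton_eq_top hπ (hp i) (e i) (a i) with ⟨y, hy⟩ | h
    · exact ⟨0, y, by rw [sub_zero, hy], Or.inl rfl⟩
    · exact ⟨a i, 0, by rw [sub_self, smul_zero], Or.inr h⟩
  choose b y hy hb using hcoord
  refine ⟨DFinsupp.equivFunOnFintype.symm b, ⟨DFinsupp.equivFunOnFintype.symm y, ?_⟩, hb⟩
  ext i
  exact hy i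

theorem smul_eq_zero_of_smul_apply_eq_zero {a : ⨁ i, R ⧸ R ∙ p i ^ e i}
    (ha : ∀ i, a i = 0 ∨ (Associated (p i) π ∧ R ∙ a i = ⊤)) {i₀ : ι} (hi₀ : a i₀ ≠ 0)
    (hmax : ∀ i, a i ≠ 0 → e i ≤ e i₀) {s : R} (hs : s • a i₀ = 0) : s • a = 0 := by
  obtain ⟨hπ₀, hgen₀⟩ := (ha i₀).resolve_left hi₀
  rw [smul_eq_zero_iff_dvd_of_span_singleton_eq_top hgen₀] at hs
  ext i
  by_cases hi : a i = 0
  · rw [smul_apply, hi, smul_zero, zero_apply]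
  obtain ⟨hπi, hgen⟩ := (ha i).resolve_left hi
  rw [smul_apply, zero_apply, smul_eq_zero_iff_dvd_of_span_singleton_eq_top hgen]
  calc p i ^ e i ∣ π ^ e i := hπi.pow_pow.dvd
    _ ∣ π ^ e i₀ := pow_dvd_pow π (hmax i hi)
    _ ∣ p i₀ ^ e i₀ := hπ₀.pow_pow.symm.dvd
    _ ∣ s := hs

theorem exists_pow_smul_eq_zero_and_isCompl [Fintype ι] {a : ⨁ i, R ⧸ R ∙ p i ^ e i}
    (ha : ∀ i, a i = 0 ∨ (Associated (p i) π ∧ R ∙ a i = ⊤)) :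
    (∃ k, π ^ k • a = 0) ∧ ∃ W, IsCompl (R ∙ a) W := by
  classical
  rcases (Finset.univ.filter (a · ≠ 0)).eq_empty_or_nonempty with hzero | hne
  · have : a = 0 := by
      ext i
      simpa using Finset.filter_eq_empty_iff.mp hzero (Finset.mem_univ i)
    subst this
    exact ⟨⟨0, smul_zero _⟩, ⊤, by rw [span_zero_singleton]; exact isCompl_bot_top⟩
  obtain ⟨i₀, hi₀, hmax⟩ := Finset.exists_max_image _ e hne
  simp only [Finset.mem_filter, Finset.mem_univ, true_and] at hi₀ hmax
  obtain ⟨hπ₀, hgen₀⟩ := (ha i₀).resolve_left hi₀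
  have hann : ∀ s : R, s • a i₀ = 0 → s • a = 0 := fun _ =>
    smul_eq_zero_of_smul_apply_eq_zero ha hi₀ hmax
  exact ⟨⟨e i₀, hann _ ((smul_eq_zero_iff_dvd_of_span_singleton_eq_top hgen₀).mpr
      hπ₀.pow_pow.dvd)⟩,
    _, (component R ι (fun i => R ⧸ R ∙ p i ^ e i) i₀).isCompl_span_singleton_ker hgen₀ hann⟩

end DirectSum

theorem Module.IsTorsion.exists_sub_eq_smul_and_isCompl {R M : Type*} [CommRing R] [IsDomain R]
    [IsPrincipalIdealRing R] [AddCommGroup M] [Module R M] [Module.Finite R M]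
    (hM : IsTorsion R M) {π : R} (hπ : Irreducible π) (a : M) :
    ∃ a', (∃ m, a - a' = π • m) ∧ (∃ k, π ^ k • a' = 0) ∧ ∃ W, IsCompl (R ∙ a') W := by
  obtain ⟨ι, _, p, hp, e, ⟨E⟩⟩ := Module.equiv_directSum_of_isTorsion hM
  obtain ⟨b, ⟨m, hm⟩, hb⟩ :=
    DirectSum.exists_sub_eq_smul_and_forall_eq_zero_or_span_singleton_eq_top hπ hp (E a)
  obtain ⟨⟨k, hk⟩, W, hW⟩ := DirectSum.exists_pow_smul_eq_zero_and_isCompl hb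
  refine ⟨E.symm b, ⟨E.symm m, ?_⟩, ⟨k, ?_⟩, W.map E.symm.toLinearMap, ?_⟩
  · rw [← map_smul, ← hm, map_sub, E.symm_apply_apply]
  · rw [← map_smul, hk, map_zero]
  · have hspan : R ∙ E.symm b = (R ∙ b).map E.symm.toLinearMap := by
      rw [Submodule.map_span, Set.image_singleton]; rfl
    rw [hspan]
    exact (Submodule.orderIsoMapComap E.symm).isCompl hW

namespace Module.AEval'

variable {R M : Type*} [CommRing R] [AddCommGroup M] [Module R M] (φ : M →ₗ[R] M)

theorem of_symm_X_sub_C_pow_smul (μ : R) (k : ℕ) (m : AEval' φ) :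
    (of φ).symm ((X - C μ) ^ k • m) = ((φ - μ • 1) ^ k) ((of φ).symm m) := by
  simp [AEval.of_symm_smul, Algebra.algebraMap_eq_smul_one]

theorem span_range_pow_apply (v : M) :
    span R (Set.range fun n : ℕ => (φ ^ n) v) =
      ((AEval.mapSubmodule R M φ).symm (R[X] ∙ of φ v) : Submodule R M) := by
  set P := span R (Set.range fun n : ℕ => (φ ^ n) v)
  have hP : P ∈ (Algebra.lsmul R R M φ).invtSubmodule := by
    rw [Module.End.mem_invtSubmodule, span_le]
    rintro _ ⟨n, rfl⟩
    exact subset_span ⟨n + 1, by simp [pow_succ']⟩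
  apply le_antisymm
  · rw [span_le]
    rintro _ ⟨n, rfl⟩
    change of φ (φ ^ n • v) ∈ R[X] ∙ of φ v
    rw [← AEval'.X_pow_smul_of]
    exact smul_mem _ _ (mem_span_singleton_self _)
  · change (AEval.mapSubmodule R M φ).symm (R[X] ∙ of φ v) ≤ ⟨P, hP⟩
    rw [OrderIso.symm_apply_le, span_singleton_le_iff_mem, AEval.mem_mapSubmodule_apply,
      LinearEquiv.symm_apply_apply]
    exact subset_span ⟨0, by simp⟩

end Module.AEval'

/-- For every `α ∈ V` there exists `α'` with `α - α' ∈ range (L - id)`,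
`α'` in the generalized eigenspace of `L` for eigenvalue 1, and such that the cyclic
subspace `⟨α'⟩ = span {Lⁿ α' : n ∈ ℕ}` has an `L`-invariant complement in `V`. -/
theorem exists_simple_representative
    {F V : Type*} [Field F] [AddCommGroup V] [Module F V] [FiniteDimensional F V]
    (L : V →ₗ[F] V) (α : V) :
    ∃ α' : V,
      α - α' ∈ LinearMap.range (L - LinearMap.id : V →ₗ[F] V) ∧
      α' ∈ Module.End.maxGenEigenspace L 1 ∧
      ∃ W : Submodule F V, (∀ w ∈ W, L w ∈ W) ∧
        IsCompl (Submodule.span F (Set.range fun n : ℕ => (L ^ n) α')) W := by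
  obtain ⟨a', ⟨m, hm⟩, ⟨k, hk⟩, W, hW⟩ :=
    (AEval.isTorsion_of_finiteDimensional F V L).exists_sub_eq_smul_and_isCompl
      (irreducible_X_sub_C 1) (AEval'.of L α)
  obtain ⟨α', rfl⟩ := (AEval'.of L).surjective a'
  let W' := (AEval.mapSubmodule F V L).symm W
  refine ⟨α', ⟨(AEval'.of L).symm m, ?_⟩, ?_, W', fun w hw => W'.2 hw, ?_⟩
  · have := congrArg (AEval'.of L).symm hm
    rw [← pow_one (X - C 1), AEval'.of_symm_X_sub_C_pow_smul] at this
    simpa using this.symm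
  · have := congrArg (AEval'.of L).symm hk
    rw [AEval'.of_symm_X_sub_C_pow_smul, LinearEquiv.symm_apply_apply, map_zero] at this
    exact (Module.End.mem_maxGenEigenspace _ _ _).mpr ⟨k, this⟩
  · rw [AEval'.span_range_pow_apply]
    exact (End.invtSubmodule.isCompl_iff _).mp ((AEval.mapSubmodule F V L).symm.isCompl hW)
end

section
/- Let V be a finite-dimensional vector space over a field F and let L : V → V be a linear map. Let γ ∈ V lie in the generalized eigenspace maxGenEigenspace(L, 1), and assume the cyclic subspace ⟨γ⟩ = span_F{ Lⁿ(γ) : n ∈ ℕ } admits an L-invariant complement in V (an L-invariant subspace W with ⟨γ⟩ ⊕ W = V). Then the smallest k ∈ ℕ with (L - id_V)^k(γ) = 0 equals τ(γ, L). -/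
/-!
Write `N = L - 1`, `U = ⟨γ⟩`, and let `W` be an invariant complement of `U`. Suppose
`γ = N v + z` with `N ^ k z = 0`, and `N ^ (n + 1)` kills `U` for some `n ≥ k`. Then
`N ^ n γ = N ^ (n + 1) v` lies in `U`, and also in `W` because `N ^ (n + 1)` kills the
`U`-component of `v`; so `N ^ n γ = 0`. As `N ^ j γ = 0` forces `N ^ j` to kill all of `U`,
this lowers the nilpotence degree of `γ` one step at a time until it reaches `τ(γ, L)`.
-/

variable {F V : Type*} [Field F] [AddCommGroup V] [Module F V]

/-- `τ(α, L)`: the smallest `k ∈ ℕ` such that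
`α ∈ range (L - id) + ker ((L - id)^k)`. -/
noncomputable def tau (L : V →ₗ[F] V) (α : V) : ℕ :=
  sInf {k : ℕ | α ∈ LinearMap.range (L - LinearMap.id : V →ₗ[F] V) ⊔
    LinearMap.ker ((L - LinearMap.id : V →ₗ[F] V) ^ k)}

open Module End Submodule LinearMap

section Semiring

variable {R M : Type*} [Semiring R] [AddCommMonoid M] [Module R M]

lemma Module.End.pow_mem_invtSubmodule {N : End R M} {p : Submodule R M}
    (hp : p ∈ N.invtSubmodule) (n : ℕ) : p ∈ (N ^ n).invtSubmodule := by
  rw [mem_invtSubmodule_iff_mapsTo, coe_pow]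
  exact ((mem_invtSubmodule_iff_mapsTo N).mp hp).iterate n

lemma span_range_pow_apply_mem_invtSubmodule (L : End R M) (γ : M) :
    span R (Set.range fun n : ℕ => (L ^ n) γ) ∈ L.invtSubmodule := by
  rw [mem_invtSubmodule_iff_map_le, Submodule.map_span_le]
  rintro _ ⟨n, rfl⟩
  exact subset_span ⟨n + 1, by simp only [pow_succ', mul_apply]⟩

lemma span_range_pow_apply_le_ker {L T : End R M} (hLT : Commute L T) {γ : M} (hγ : T γ = 0) :
    span R (Set.range fun n : ℕ => (L ^ n) γ) ≤ ker T := by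
  rw [span_le]
  rintro _ ⟨n, rfl⟩
  change T ((L ^ n) γ) = 0
  rw [← mul_apply, ← (hLT.pow_left n).eq, mul_apply, hγ, map_zero]

end Semiring

section Ring

variable {R M : Type*} [Ring R] [AddCommGroup M] [Module R M]

lemma Module.End.sub_id_mem_invtSubmodule {L : End R M} {p : Submodule R M}
    (hp : p ∈ L.invtSubmodule) : p ∈ (L - LinearMap.id).invtSubmodule :=
  fun x hx => by simpa using p.sub_mem (hp hx) hx

lemma pow_apply_eq_zero_of_mem_range_sup_ker {N : End R M} {U W : Submodule R M}
    (hUW : IsCompl U W) (hU : U ∈ N.invtSubmodule) (hW : W ∈ N.invtSubmodule) {n k : ℕ}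
    (hUn : U ≤ ker (N ^ (n + 1))) (hkn : k ≤ n) {x : M} (hxU : x ∈ U)
    (hx : x ∈ range N ⊔ ker (N ^ k)) : (N ^ n) x = 0 := by
  obtain ⟨_, ⟨v, rfl⟩, z, hz, rfl⟩ := mem_sup.mp hx
  obtain ⟨u, hu, w, hw, rfl⟩ := mem_sup.mp (hUW.codisjoint.eq_top ▸ mem_top : v ∈ U ⊔ W)
  have hNx : (N ^ n) (N (u + w) + z) = (N ^ (n + 1)) w := by
    rw [map_add, pow_map_zero_of_le hkn hz, add_zero, ← mul_apply, ← pow_succ, map_add,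
      hUn hu, zero_add]
  refine disjoint_def.mp hUW.disjoint _ (pow_mem_invtSubmodule hU n hxU) ?_
  exact hNx ▸ pow_mem_invtSubmodule hW (n + 1) hw

end Ring

lemma tau_le_of_pow_apply_eq_zero {L : V →ₗ[F] V} {α : V} {k : ℕ}
    (h : ((L - LinearMap.id : V →ₗ[F] V) ^ k) α = 0) : tau L α ≤ k :=
  Nat.sInf_le (Submodule.mem_sup_right h)

lemma mem_range_sup_ker_pow_tau {L : V →ₗ[F] V} {α : V} {k : ℕ}
    (h : ((L - LinearMap.id : V →ₗ[F] V) ^ k) α = 0) :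
    α ∈ range (L - LinearMap.id : V →ₗ[F] V) ⊔
      ker ((L - LinearMap.id : V →ₗ[F] V) ^ tau L α) :=
  Nat.sInf_mem (s := {j | α ∈ range (L - LinearMap.id : V →ₗ[F] V) ⊔
    ker ((L - LinearMap.id : V →ₗ[F] V) ^ j)}) ⟨k, Submodule.mem_sup_right h⟩

theorem tau_eq_nilpotence_degree_of_complemented_general
    (L : V →ₗ[F] V) (γ : V)
    (hγ : γ ∈ Module.End.maxGenEigenspace L 1)
    (hcompl : ∃ W : Submodule F V, (∀ w ∈ W, L w ∈ W) ∧
      IsCompl (Submodule.span F (Set.range fun n : ℕ => (L ^ n) γ)) W) :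
    IsLeast {k : ℕ | ((L - LinearMap.id : V →ₗ[F] V) ^ k) γ = 0} (tau L γ) := by
  obtain ⟨W, hWL, hUW⟩ := hcompl
  set N : End F V := L - LinearMap.id
  have hLN : Commute L N := (Commute.refl L).sub_right (Commute.one_right L)
  have descend (n : ℕ) (hn : tau L γ ≤ n) (h : (N ^ (n + 1)) γ = 0) : (N ^ n) γ = 0 :=
    pow_apply_eq_zero_of_mem_range_sup_ker hUW
      (sub_id_mem_invtSubmodule (span_range_pow_apply_mem_invtSubmodule L γ))
      (sub_id_mem_invtSubmodule hWL) (span_range_pow_apply_le_ker (hLN.pow_right _) h) hn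
      (subset_span ⟨0, by simp⟩) (mem_range_sup_ker_pow_tau h)
  obtain ⟨m, hm⟩ : ∃ m, (N ^ m) γ = 0 := by simpa [N, one_eq_id] using hγ
  refine ⟨?_, fun k hk => tau_le_of_pow_apply_eq_zero hk⟩
  rcases le_total m (tau L γ) with h | h
  · exact pow_map_zero_of_le h hm
  · exact Nat.decreasingInduction' (fun n _ hn => descend n hn) h hm

/-- If `γ` lies in the generalized eigenspace of `L` for eigenvalue 1
and the cyclic subspace `⟨γ⟩` has an `L`-invariant complement in `V`, then the
smallest `k` with `(L - id)^k γ = 0` equals `τ(γ, L)`. -/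
theorem tau_eq_nilpotence_degree_of_complemented
    [FiniteDimensional F V] (L : V →ₗ[F] V) (γ : V)
    (hγ : γ ∈ Module.End.maxGenEigenspace L 1)
    (hcompl : ∃ W : Submodule F V, (∀ w ∈ W, L w ∈ W) ∧
      IsCompl (Submodule.span F (Set.range fun n : ℕ => (L ^ n) γ)) W) :
    IsLeast {k : ℕ | ((L - LinearMap.id : V →ₗ[F] V) ^ k) γ = 0} (tau L γ) :=
  tau_eq_nilpotence_degree_of_complemented_general L γ hγ hcompl
end

section
/- Let V be a finite-dimensional vector space over a field F, and let L, M : V → V be linear maps that are similar, i.e. there exists a linear automorphism S of V with S ∘ L = M ∘ S. Then for all α, β ∈ V: there exists a linear automorphism T of V with T ∘ L = M ∘ T and T(α) - β ∈ range(M - id_V) (so T takes the coset α + range(L - id_V) to the coset β + range(M - id_V)) if and only if τ(α, L) = τ(β, M). -/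
variable {F V : Type*} [Field F] [AddCommGroup V] [Module F V]

/-!
Make `V` an `F[X]`-module with `X` acting by `L`. Then `range (L - id)` is `(X - 1) V` and
`τ(α, L)` is the least `k` with `α ∈ (X - 1) V + ker (X - 1) ^ k`, which is invariant under
`F[X]`-isomorphisms and under translation by `(X - 1) V`; this gives one direction.

For the converse decompose `V ≅ ⨁ F[X] ⧸ (q i ^ e i)` with `q i` irreducible. If `τ(α) = t > 0`,
then modulo `(X - 1) V` the element `α` equals some `w` killed by `(X - 1) ^ t` whose coordinate
in a summand `F[X] ⧸ (X - 1) ^ t` is a unit, and an automorphism moves the generator of that summand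
to `w`. Generators of two summands of the same type are exchanged by an automorphism, so elements
with equal `τ` are related by an automorphism up to `(X - 1) V`.
-/

open Polynomial DirectSum Module

section TauSet

variable {R M N : Type*} [CommRing R] [AddCommGroup M] [Module R M] [AddCommGroup N] [Module R N]

/-- For `M = V` with `X` acting as `L` and `p = X - 1`, this is the set whose infimum is
`tau L x`. -/
def tauSet (p : R) (x : M) : Set ℕ :=
  {k | ∃ u w : M, x = p • u + w ∧ p ^ k • w = 0}

variable {p : R}

theorem map_mem_tauSet (f : M →ₗ[R] N) {x : M} {k : ℕ} (h : k ∈ tauSet p x) :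
    k ∈ tauSet p (f x) := by
  obtain ⟨u, w, rfl, hw⟩ := h
  exact ⟨f u, f w, by rw [map_add, map_smul], by rw [← map_smul, hw, map_zero]⟩

theorem tauSet_linearEquiv (e : M ≃ₗ[R] N) (x : M) : tauSet p (e x) = tauSet p x :=
  Set.ext fun _ ↦
    ⟨fun h ↦ by simpa using map_mem_tauSet e.symm.toLinearMap h, map_mem_tauSet e.toLinearMap⟩

theorem tauSet_add_smul (x u : M) : tauSet p (x + p • u) = tauSet p x := by
  ext k
  constructor
  · rintro ⟨v, w, hx, hw⟩
    exact ⟨v - u, w, by rw [smul_sub, sub_add_eq_add_sub, ← hx, add_sub_cancel_right], hw⟩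
  · rintro ⟨v, w, rfl, hw⟩
    exact ⟨v + u, w, by rw [smul_add, add_right_comm], hw⟩

theorem zero_mem_tauSet_iff {x : M} : 0 ∈ tauSet p x ↔ ∃ u, x = p • u := by
  constructor
  · rintro ⟨u, w, rfl, hw⟩
    rw [pow_zero, one_smul] at hw
    exact ⟨u, by rw [hw, add_zero]⟩
  · rintro ⟨u, rfl⟩
    exact ⟨u, 0, (add_zero _).symm, smul_zero _⟩

theorem mem_tauSet_of_eq_smul {x u : M} (h : x = p • u) (k : ℕ) : k ∈ tauSet p x :=
  ⟨u, 0, by rw [h, add_zero], smul_zero _⟩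

theorem mem_tauSet_of_pow_smul_eq_zero {x : M} {k : ℕ} (h : p ^ k • x = 0) : k ∈ tauSet p x :=
  ⟨0, x, by rw [smul_zero, zero_add], h⟩

theorem mem_tauSet_pi_iff {ι : Type*} {M : ι → Type*} [∀ i, AddCommGroup (M i)]
    [∀ i, Module R (M i)] {x : ∀ i, M i} {k : ℕ} :
    k ∈ tauSet p x ↔ ∀ i, k ∈ tauSet p (x i) := by
  refine ⟨fun h i ↦ map_mem_tauSet (LinearMap.proj i) h, fun h ↦ ?_⟩
  choose u w hx hw using h
  exact ⟨u, w, funext hx, funext hw⟩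

theorem mem_tauSet_directSum_iff {ι : Type*} [Fintype ι] {M : ι → Type*}
    [∀ i, AddCommGroup (M i)] [∀ i, Module R (M i)] {x : ⨁ i, M i} {k : ℕ} :
    k ∈ tauSet p x ↔ ∀ i, k ∈ tauSet p (x i) := by
  rw [← tauSet_linearEquiv (DirectSum.linearEquivFunOnFintype R ι M), mem_tauSet_pi_iff]
  rfl

end TauSet

section Cyclic

variable {R : Type*} [CommRing R] {p q : R} {e : ℕ}

theorem smul_eq_zero_of_dvd {c d : R} (h : c ∣ d) (x : R ⧸ R ∙ c) : d • x = 0 := by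
  obtain ⟨r, rfl⟩ := Submodule.Quotient.mk_surjective _ x
  obtain ⟨s, rfl⟩ := h
  rw [← Submodule.Quotient.mk_smul, Submodule.Quotient.mk_eq_zero, Submodule.mem_span_singleton]
  exact ⟨s * r, by rw [smul_eq_mul, smul_eq_mul]; ring⟩

theorem mem_tauSet_of_le (hqp : Associated q p) {k : ℕ} (hek : e ≤ k) (x : R ⧸ R ∙ q ^ e) :
    k ∈ tauSet p x :=
  mem_tauSet_of_pow_smul_eq_zero <|
    smul_eq_zero_of_dvd (hqp.pow_pow.dvd.trans (pow_dvd_pow p hek)) x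

theorem exists_eq_smul_of_mem_tauSet [IsDomain R] (hp : Prime p) (hqp : Associated q p) {k : ℕ}
    (hk : k < e) {x : R ⧸ R ∙ q ^ e} (hx : k ∈ tauSet p x) : ∃ u, x = p • u := by
  obtain ⟨u, w, rfl, hw⟩ := hx
  obtain ⟨r, rfl⟩ := Submodule.Quotient.mk_surjective _ w
  rw [← Submodule.Quotient.mk_smul, Submodule.Quotient.mk_eq_zero,
    Submodule.mem_span_singleton] at hw
  obtain ⟨s, hs⟩ := hw
  have hpow : p ^ k * p ^ (e - k) ∣ p ^ k * r := by
    rw [← pow_add, Nat.add_sub_cancel' hk.le, ← smul_eq_mul (p ^ k), ← hs, smul_eq_mul]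
    exact hqp.symm.pow_pow.dvd.mul_left s
  obtain ⟨r', rfl⟩ := (dvd_pow_self p (Nat.sub_ne_zero_of_lt hk)).trans
    ((mul_dvd_mul_iff_left (pow_ne_zero k hp.ne_zero)).mp hpow)
  exact ⟨u + Submodule.Quotient.mk r', by rw [smul_add, ← Submodule.Quotient.mk_smul, smul_eq_mul]⟩

theorem exists_eq_smul_of_not_associated [IsDomain R] [IsBezout R] (hp : Prime p)
    (hq : Irreducible q) (hqp : ¬Associated q p) (x : R ⧸ R ∙ q ^ e) : ∃ u, x = p • u := by
  have hpq : ¬p ∣ q ^ e := fun h ↦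
    hqp (hp.irreducible.associated_of_dvd hq (hp.dvd_of_dvd_pow h)).symm
  obtain ⟨s, t, hst⟩ := hp.coprime_iff_not_dvd.mpr hpq
  refine ⟨s • x, ?_⟩
  calc x = (s * p) • x + t • (q ^ e • x) := by rw [smul_smul, ← add_smul, hst, one_smul]
    _ = p • s • x := by rw [smul_eq_zero_of_dvd dvd_rfl x, smul_zero, add_zero, mul_comm, mul_smul]

theorem exists_smul_eq_mk_one [IsBezout R] (hq : Irreducible q) (hqp : Associated q p)
    {x : R ⧸ R ∙ q ^ e} (hx : ¬∃ u, x = p • u) : ∃ s : R, s • x = Submodule.Quotient.mk 1 := by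
  obtain ⟨r, rfl⟩ := Submodule.Quotient.mk_surjective _ x
  have hqr : ¬q ∣ r := by
    rintro ⟨r', rfl⟩
    obtain ⟨v, hv⟩ := hqp.symm
    exact hx ⟨Submodule.Quotient.mk (v * r'), by
      rw [← Submodule.Quotient.mk_smul, smul_eq_mul, ← mul_assoc, hv]⟩
  obtain ⟨s, t, hst⟩ := ((hq.coprime_iff_not_dvd).mpr hqr).pow_left (m := e)
  refine ⟨t, ?_⟩
  rw [← Submodule.Quotient.mk_smul, Submodule.Quotient.eq, Submodule.mem_span_singleton]
  exact ⟨-s, by rw [smul_eq_mul, smul_eq_mul]; linear_combination -hst⟩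

end Cyclic

section CyclicSum

variable {R : Type*} [CommRing R] {ι : Type*} [DecidableEq ι]

def cyclicGen (c : ι → R) (j : ι) : ⨁ i, R ⧸ R ∙ c i :=
  lof R ι (fun i ↦ R ⧸ R ∙ c i) j (Submodule.Quotient.mk 1)

variable {c : ι → R}

theorem cyclicGen_apply_self (j : ι) : cyclicGen c j j = Submodule.Quotient.mk 1 :=
  lof_apply R j _

theorem cyclicGen_apply_of_ne {i j : ι} (h : i ≠ j) : cyclicGen c j i = 0 :=
  DFinsupp.single_eq_of_ne h

theorem smul_cyclicGen_eq_zero {j : ι} {d : R} (h : c j ∣ d) : d • cyclicGen c j = 0 := by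
  rw [cyclicGen, ← map_smul, smul_eq_zero_of_dvd h, map_zero]

theorem exists_linearEquiv_cyclicGen_eq [IsArtinian R (⨁ i, R ⧸ R ∙ c i)] (j : ι)
    {x : ⨁ i, R ⧸ R ∙ c i} (hcx : c j • x = 0) (hx : ∃ s : R, s • x j = Submodule.Quotient.mk 1) :
    ∃ Φ : (⨁ i, R ⧸ R ∙ c i) ≃ₗ[R] (⨁ i, R ⧸ R ∙ c i), Φ (cyclicGen c j) = x := by
  obtain ⟨s, hs⟩ := hx
  rw [apply_eq_component R] at hs
  let ψ : R ⧸ R ∙ c j →ₗ[R] ⨁ i, R ⧸ R ∙ c i :=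
    Submodule.liftQSpanSingleton (c j) (LinearMap.toSpanSingleton R _ x) hcx
  have hψ (r : R) : ψ (Submodule.Quotient.mk r) = r • x := rfl
  let π := component R ι (fun i ↦ R ⧸ R ∙ c i) j
  let φ : (⨁ i, R ⧸ R ∙ c i) →ₗ[R] ⨁ i, R ⧸ R ∙ c i :=
    LinearMap.id + (ψ - lof R ι (fun i ↦ R ⧸ R ∙ c i) j) ∘ₗ π
  have hφ (y) : φ y = y + ψ (π y) - lof R ι (fun i ↦ R ⧸ R ∙ c i) j (π y) := by
    simp only [φ, LinearMap.add_apply, LinearMap.id_apply, LinearMap.comp_apply,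
      LinearMap.sub_apply, add_sub_assoc]
  have hinj : Function.Injective φ := by
    refine (injective_iff_map_eq_zero φ).mpr fun y hy ↦ ?_
    obtain ⟨r, hr⟩ := Submodule.Quotient.mk_surjective _ (π y)
    have hrx : r • π x = 0 := by
      have := congrArg π hy
      rwa [hφ, ← hr, hψ, map_sub, map_add, map_smul, component.lof_self, ← hr,
        add_sub_cancel_left, map_zero] at this
    have hyj : π y = 0 := by
      rw [← hr, ← mul_one r, ← smul_eq_mul, Submodule.Quotient.mk_smul, ← hs, smul_comm, hrx,
        smul_zero]
    rwa [hφ, hyj, map_zero, map_zero, add_zero, sub_zero] at hy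
  refine ⟨.ofBijective φ (IsArtinian.bijective_of_injective_endomorphism φ hinj), ?_⟩
  change φ _ = x
  rw [hφ, cyclicGen, component.lof_self, hψ, one_smul, add_sub_cancel_left]

theorem exists_linearEquiv_cyclicGen_eq_cyclicGen [IsArtinian R (⨁ i, R ⧸ R ∙ c i)] {j l : ι}
    (h : Associated (c j) (c l)) :
    ∃ Ψ : (⨁ i, R ⧸ R ∙ c i) ≃ₗ[R] (⨁ i, R ⧸ R ∙ c i), Ψ (cyclicGen c j) = cyclicGen c l := by
  obtain rfl | hjl := eq_or_ne j l
  · exact ⟨.refl R _, rfl⟩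
  -- both generators are moved to their sum
  have hsum (i : ι) (hi : Associated (c i) (c j)) :
      c i • (cyclicGen c j + cyclicGen c l) = 0 := by
    rw [smul_add, smul_cyclicGen_eq_zero hi.symm.dvd, smul_cyclicGen_eq_zero (hi.trans h).symm.dvd,
      add_zero]
  obtain ⟨Φj, hΦj⟩ := exists_linearEquiv_cyclicGen_eq j (hsum j (.refl _))
    ⟨1, by simp [cyclicGen_apply_self, cyclicGen_apply_of_ne hjl]⟩
  obtain ⟨Φl, hΦl⟩ := exists_linearEquiv_cyclicGen_eq l (hsum l h.symm)
    ⟨1, by simp [cyclicGen_apply_self, cyclicGen_apply_of_ne hjl.symm]⟩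
  exact ⟨Φj.trans Φl.symm, by rw [LinearEquiv.trans_apply, hΦj, ← hΦl, Φl.symm_apply_apply]⟩

end CyclicSum

section PrimaryCyclicSum

variable {R : Type*} [CommRing R] [IsDomain R] [IsBezout R] {p : R} {ι : Type*} [Fintype ι]
  {q : ι → R} {e : ι → ℕ}

theorem tauSet_nonempty (hp : Prime p) (hq : ∀ i, Irreducible (q i))
    (x : ⨁ i, R ⧸ R ∙ q i ^ e i) : (tauSet p x).Nonempty := by
  refine ⟨Finset.univ.sup e, mem_tauSet_directSum_iff.mpr fun i ↦ ?_⟩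
  by_cases hqp : Associated (q i) p
  · exact mem_tauSet_of_le hqp (Finset.le_sup (Finset.mem_univ i)) _
  · obtain ⟨u, hu⟩ := exists_eq_smul_of_not_associated hp (hq i) hqp (x i)
    exact mem_tauSet_of_eq_smul hu _

theorem exists_summand_of_notMem_tauSet (hp : Prime p) (hq : ∀ i, Irreducible (q i))
    {x : ⨁ i, R ⧸ R ∙ q i ^ e i} {t : ℕ} (ht : t + 1 ∈ tauSet p x) (hnt : t ∉ tauSet p x) :
    ∃ j, Associated (q j) p ∧ e j = t + 1 ∧ ¬∃ u, x j = p • u := by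
  obtain ⟨j, hj⟩ : ∃ j, t ∉ tauSet p (x j) := by
    simpa [mem_tauSet_directSum_iff] using hnt
  have hdiv : ¬∃ u, x j = p • u := fun ⟨u, hu⟩ ↦ hj (mem_tauSet_of_eq_smul hu t)
  have hqp : Associated (q j) p := by
    by_contra hqp
    exact hdiv (exists_eq_smul_of_not_associated hp (hq j) hqp (x j))
  have hle : e j ≤ t + 1 := by
    by_contra! hlt
    exact hdiv (exists_eq_smul_of_mem_tauSet hp hqp hlt (mem_tauSet_directSum_iff.mp ht j))
  have hgt : t < e j := by
    by_contra! hle'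
    exact hj (mem_tauSet_of_le hqp hle' _)
  exact ⟨j, hqp, by omega, hdiv⟩

variable [DecidableEq ι]

theorem exists_linearEquiv_cyclicGen_of_sInf_tauSet_pos [IsArtinian R (⨁ i, R ⧸ R ∙ q i ^ e i)]
    (hp : Prime p) (hq : ∀ i, Irreducible (q i)) {x : ⨁ i, R ⧸ R ∙ q i ^ e i}
    (hx : 0 < sInf (tauSet p x)) :
    ∃ j, Associated (q j ^ e j) (p ^ sInf (tauSet p x)) ∧
      ∃ (Φ : (⨁ i, R ⧸ R ∙ q i ^ e i) ≃ₗ[R] (⨁ i, R ⧸ R ∙ q i ^ e i)) (u : _),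
        x = p • u + Φ (cyclicGen _ j) := by
  obtain ⟨t, ht⟩ := Nat.exists_eq_add_of_lt hx
  rw [zero_add] at ht
  have hmem : t + 1 ∈ tauSet p x := ht ▸ Nat.sInf_mem (tauSet_nonempty hp hq x)
  obtain ⟨j, hqp, hej, hdiv⟩ :=
    exists_summand_of_notMem_tauSet hp hq hmem (Nat.notMem_of_lt_sInf (by omega))
  have hassoc : Associated (q j ^ e j) (p ^ (t + 1)) := hej ▸ hqp.pow_pow
  obtain ⟨u, w, rfl, hw⟩ := hmem
  -- `w` is killed by `q j ^ e j` and its `j`-th coordinate is a unit, like `cyclicGen _ j`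
  have hwj : ¬∃ v, w j = p • v := fun ⟨v, hv⟩ ↦
    hdiv ⟨u j + v, by rw [DirectSum.add_apply, DirectSum.smul_apply, hv, smul_add]⟩
  obtain ⟨Φ, hΦ⟩ := exists_linearEquiv_cyclicGen_eq (c := fun i ↦ q i ^ e i) j
    (by obtain ⟨v, hv⟩ := hassoc.symm; rw [← hv, mul_comm, mul_smul, hw, smul_zero])
    (exists_smul_eq_mk_one (hq j) hqp hwj)
  exact ⟨j, ht ▸ hassoc, Φ, u, by rw [hΦ]⟩

theorem exists_linearEquiv_sub_eq_smul_of_sInf_tauSet_eq_directSum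
    [IsArtinian R (⨁ i, R ⧸ R ∙ q i ^ e i)] (hp : Prime p) (hq : ∀ i, Irreducible (q i))
    {a b : ⨁ i, R ⧸ R ∙ q i ^ e i} (h : sInf (tauSet p a) = sInf (tauSet p b)) :
    ∃ (T : (⨁ i, R ⧸ R ∙ q i ^ e i) ≃ₗ[R] (⨁ i, R ⧸ R ∙ q i ^ e i)) (u : _), T a - b = p • u := by
  obtain ha | ha := Nat.eq_zero_or_pos (sInf (tauSet p a))
  · have hb := h ▸ ha
    obtain ⟨ua, rfl⟩ := zero_mem_tauSet_iff.mp (ha ▸ Nat.sInf_mem (tauSet_nonempty hp hq a))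
    obtain ⟨ub, rfl⟩ := zero_mem_tauSet_iff.mp (hb ▸ Nat.sInf_mem (tauSet_nonempty hp hq b))
    exact ⟨.refl R _, ua - ub, by rw [LinearEquiv.refl_apply, smul_sub]⟩
  obtain ⟨j, hj, Φa, ua, rfl⟩ := exists_linearEquiv_cyclicGen_of_sInf_tauSet_pos hp hq ha
  obtain ⟨l, hl, Φb, ub, rfl⟩ := exists_linearEquiv_cyclicGen_of_sInf_tauSet_pos hp hq (h ▸ ha)
  rw [← h] at hl
  obtain ⟨Ψ, hΨ⟩ :=
    exists_linearEquiv_cyclicGen_eq_cyclicGen (c := fun i ↦ q i ^ e i) (hj.trans hl.symm)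
  let T := Φa.symm.trans (Ψ.trans Φb)
  refine ⟨T, T ua - ub, ?_⟩
  have hT : T (Φa (cyclicGen _ j)) = Φb (cyclicGen _ l) := by
    simp only [T, LinearEquiv.trans_apply, LinearEquiv.symm_apply_apply, hΨ]
  rw [map_add, map_smul, hT, smul_sub]
  abel

end PrimaryCyclicSum

theorem exists_linearEquiv_sub_eq_smul_of_sInf_tauSet_eq {R M : Type*} [CommRing R] [IsDomain R]
    [IsPrincipalIdealRing R] [AddCommGroup M] [Module R M] [Module.Finite R M] [IsArtinian R M]
    (hM : Module.IsTorsion R M) {p : R} (hp : Prime p) {a b : M}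
    (h : sInf (tauSet p a) = sInf (tauSet p b)) : ∃ (T : M ≃ₗ[R] M) (u : M), T a - b = p • u := by
  classical
  obtain ⟨ι, _, q, hq, e, ⟨g⟩⟩ := Module.equiv_directSum_of_isTorsion hM
  have := isArtinian_of_linearEquiv g
  obtain ⟨T, u, hT⟩ := exists_linearEquiv_sub_eq_smul_of_sInf_tauSet_eq_directSum hp hq
    (a := g a) (b := g b) (by rwa [tauSet_linearEquiv, tauSet_linearEquiv])
  refine ⟨g.trans (T.trans g.symm), g.symm u, g.injective ?_⟩
  simp [hT]

section LinearMap

variable {W : Type*} [AddCommGroup W] [Module F W] {L : V →ₗ[F] V} {M : W →ₗ[F] W}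

noncomputable def aevalEquivOfComp (T : V ≃ₗ[F] W) (hT : T.toLinearMap ∘ₗ L = M ∘ₗ T.toLinearMap) :
    AEval' L ≃ₗ[F[X]] AEval' M :=
  .ofAEval L (T.trans (AEval'.of M)) fun v ↦ by
    change AEval'.of M (T (L v)) = _
    rw [LinearEquiv.trans_apply, AEval'.X_smul_of]
    exact congrArg _ (LinearMap.congr_fun hT v)

theorem aevalEquivOfComp_of (T : V ≃ₗ[F] W) (hT : T.toLinearMap ∘ₗ L = M ∘ₗ T.toLinearMap)
    (v : V) : aevalEquivOfComp T hT (AEval'.of L v) = AEval'.of M (T v) :=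
  rfl

noncomputable def linearEquivOfAEval (E : AEval' L ≃ₗ[F[X]] AEval' M) : V ≃ₗ[F] W :=
  (AEval'.of L).trans ((E.restrictScalars F).trans (AEval'.of M).symm)

theorem linearEquivOfAEval_comp (E : AEval' L ≃ₗ[F[X]] AEval' M) :
    (linearEquivOfAEval E).toLinearMap ∘ₗ L = M ∘ₗ (linearEquivOfAEval E).toLinearMap := by
  ext v
  simp [linearEquivOfAEval, ← AEval'.X_smul_of]

theorem sub_one_pow_smul_of (L : V →ₗ[F] V) (k : ℕ) (v : V) :
    ((X - 1 : F[X]) ^ k) • AEval'.of L v =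
      AEval'.of L (((L - LinearMap.id : V →ₗ[F] V) ^ k) v) := by
  rw [← AEval.of_aeval_smul]
  simp [Module.End.one_eq_id]

theorem mem_range_sub_id_iff (L : V →ₗ[F] V) (v : V) :
    v ∈ LinearMap.range (L - LinearMap.id : V →ₗ[F] V) ↔
      ∃ u, AEval'.of L v = (X - 1 : F[X]) • u := by
  have h (w : V) :
      (X - 1 : F[X]) • AEval'.of L w = AEval'.of L ((L - LinearMap.id : V →ₗ[F] V) w) := by
    simpa using sub_one_pow_smul_of L 1 w
  constructor
  · rintro ⟨w, rfl⟩
    exact ⟨AEval'.of L w, (h w).symm⟩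
  · rintro ⟨u, hu⟩
    obtain ⟨w, rfl⟩ := (AEval'.of L).surjective u
    exact ⟨w, (AEval'.of L).injective (by rw [hu, h])⟩

theorem tau_eq_sInf_tauSet (L : V →ₗ[F] V) (v : V) :
    tau L v = sInf (tauSet (X - 1 : F[X]) (AEval'.of L v)) := by
  refine congrArg sInf (Set.ext fun k ↦ ⟨fun hv ↦ ?_, ?_⟩)
  · obtain ⟨y, hy, z, hz, rfl⟩ := Submodule.mem_sup.mp hv
    obtain ⟨u, hu⟩ := (mem_range_sub_id_iff L y).mp hy
    exact ⟨u, AEval'.of L z, by rw [map_add, hu],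
      by rw [sub_one_pow_smul_of, LinearMap.mem_ker.mp hz, map_zero]⟩
  · rintro ⟨u, w, hv, hw⟩
    obtain ⟨z, rfl⟩ := (AEval'.of L).surjective w
    rw [sub_one_pow_smul_of, LinearEquiv.map_eq_zero_iff] at hw
    have hy : v - z ∈ LinearMap.range (L - LinearMap.id : V →ₗ[F] V) :=
      (mem_range_sub_id_iff L _).mpr ⟨u, by rw [map_sub, hv, add_sub_cancel_right]⟩
    exact Submodule.mem_sup.mpr ⟨_, hy, z, hw, sub_add_cancel v z⟩

theorem tau_apply_eq_of_comp (T : V ≃ₗ[F] W) (hT : T.toLinearMap ∘ₗ L = M ∘ₗ T.toLinearMap)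
    (v : V) : tau M (T v) = tau L v := by
  rw [tau_eq_sInf_tauSet, tau_eq_sInf_tauSet, ← aevalEquivOfComp_of T hT, tauSet_linearEquiv]

theorem tau_add_of_mem_range {v w : V} (hw : w ∈ LinearMap.range (L - LinearMap.id : V →ₗ[F] V)) :
    tau L (v + w) = tau L v := by
  obtain ⟨u, hu⟩ := (mem_range_sub_id_iff L w).mp hw
  rw [tau_eq_sInf_tauSet, tau_eq_sInf_tauSet, map_add, hu, tauSet_add_smul]

end LinearMap

/-- If `L` and `M` are similar linear maps on a finite-dimensional
space `V`, then for all `α β : V` there is a module isomorphism `T` intertwining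
`L` and `M` and taking the coset `α + range (L - id)` to `β + range (M - id)`,
if and only if `τ(α, L) = τ(β, M)`. -/
theorem exists_intertwiner_coset_iff_tau_eq
    [FiniteDimensional F V] (L M : V →ₗ[F] V)
    (hsim : ∃ S : V ≃ₗ[F] V, S.toLinearMap ∘ₗ L = M ∘ₗ S.toLinearMap)
    (α β : V) :
    (∃ T : V ≃ₗ[F] V, T.toLinearMap ∘ₗ L = M ∘ₗ T.toLinearMap ∧
        T α - β ∈ LinearMap.range (M - LinearMap.id : V →ₗ[F] V)) ↔
      tau L α = tau M β := by
  constructor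
  · rintro ⟨T, hT, hmem⟩
    rw [← tau_apply_eq_of_comp T hT, ← tau_add_of_mem_range (v := β) hmem, add_sub_cancel]
  · intro h
    obtain ⟨S, hS⟩ := hsim
    let E := aevalEquivOfComp S hS
    have : IsArtinian F[X] (AEval' M) := isArtinian_of_tower F inferInstance
    obtain ⟨T, u, hTu⟩ := exists_linearEquiv_sub_eq_smul_of_sInf_tauSet_eq
      (AEval.isTorsion_of_finiteDimensional F V M) (C_1 (R := F) ▸ prime_X_sub_C 1)
      (a := E (AEval'.of L α)) (b := AEval'.of M β)
      (by rw [tauSet_linearEquiv, ← tau_eq_sInf_tauSet, ← tau_eq_sInf_tauSet, h])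
    refine ⟨linearEquivOfAEval (E.trans T), linearEquivOfAEval_comp _,
      (mem_range_sub_id_iff M _).mpr ⟨u, ?_⟩⟩
    simpa [linearEquivOfAEval] using hTu
end

section
/- Let f : E → E be an affine map with linear part f̄, and let A ∈ E. If 𝓕 is a flat of E (a nonempty affine subspace) which is invariant under f (f maps 𝓕 into 𝓕) and which contains the point A, then Flat(A, f) := A + ⟨f(A) -ᵥ A⟩ is contained in 𝓕, where ⟨f(A) -ᵥ A⟩ = span_F{ f̄ⁿ(f(A) -ᵥ A) : n ∈ ℕ }; in particular span_F{ f̄ⁿ(f(A) -ᵥ A) : n ∈ ℕ } is contained in the direction of 𝓕. -/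
/-- If `𝓕` is a flat of `E` (a nonempty affine subspace) invariant
under `f` and containing the point `A`, then the flat
`Flat(A, f) = A + span {f.linearⁿ (f A -ᵥ A) : n ∈ ℕ}` is contained in `𝓕`;
in particular `span {f.linearⁿ (f A -ᵥ A) : n ∈ ℕ}` is contained in the direction
of `𝓕`. -/
theorem flat_min_invariant_subset
    {F V E : Type*} [Field F] [AddCommGroup V] [Module F V] [AddTorsor V E]
    (f : E →ᵃ[F] E) (A : E) (𝓕 : AffineSubspace F E)
    (hinv : ∀ P ∈ 𝓕, f P ∈ 𝓕) (hA : A ∈ 𝓕) :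
    (∀ v ∈ Submodule.span F (Set.range fun n : ℕ => (f.linear ^ n) (f A -ᵥ A)),
        v +ᵥ A ∈ 𝓕) ∧
    Submodule.span F (Set.range fun n : ℕ => (f.linear ^ n) (f A -ᵥ A)) ≤
      𝓕.direction := by
  have hiter : ∀ n : ℕ, f^[n] A ∈ 𝓕 := by
    intro n
    induction n with
    | zero => simpa using hA
    | succ n ih => rw [Function.iterate_succ_apply']; exact hinv _ ih
  have hgen : ∀ n : ℕ, (f.linear ^ n) (f A -ᵥ A) = f^[n] (f A) -ᵥ f^[n] A := by
    intro n
    induction n with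
    | zero => simp
    | succ n ih =>
      rw [pow_succ', Function.iterate_succ_apply', Function.iterate_succ_apply',
        Module.End.mul_apply, ih, AffineMap.linearMap_vsub]
  have hle : Submodule.span F (Set.range fun n : ℕ => (f.linear ^ n) (f A -ᵥ A)) ≤
      𝓕.direction := by
    rw [Submodule.span_le]
    rintro v ⟨n, rfl⟩
    simp only []; rw [hgen n]
    exact AffineSubspace.vsub_mem_direction
      (by rw [← Function.iterate_succ_apply]; exact hiter (n + 1)) (hiter n)
  exact ⟨fun v hv => AffineSubspace.vadd_mem_of_mem_direction (hle hv) hA, hle⟩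
end

section
/- Let (E, V) be an affine space over a field F with V finite-dimensional, and let f : E → E be an affine map with linear part f̄. Then there exists a point A ∈ E such that the cyclic subspace ⟨f(A) -ᵥ A⟩ = span_F{ f̄ⁿ(f(A) -ᵥ A) : n ∈ ℕ } has dimension exactly τ(f) and is contained in maxGenEigenspace(f̄, 1); consequently the flat A + ⟨f(A) -ᵥ A⟩ is an f-invariant flat through A of dimension τ(f). -/
variable {F V E : Type*} [Field F] [AddCommGroup V] [Module F V] [AddTorsor V E]

/-- `τ(f)` for an affine map `f : E → E`: `τ(f(A) -ᵥ A, f.linear)` for a point `A`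
(this does not depend on the choice of `A`). -/
noncomputable def tauAff (f : E →ᵃ[F] E) : ℕ :=
  tau f.linear (f (Classical.arbitrary E) -ᵥ (Classical.arbitrary E))

/-- The span of the orbit of `α` under powers of `M` is invariant under `M`. -/
lemma aux_span_pow_inv (M : V →ₗ[F] V) (α x : V)
    (hx : x ∈ Submodule.span F (Set.range fun k : ℕ => (M ^ k) α)) :
    M x ∈ Submodule.span F (Set.range fun k : ℕ => (M ^ k) α) := by
  induction hx using Submodule.span_induction with
  | mem x hx =>
      obtain ⟨k, rfl⟩ := hx
      exact Submodule.subset_span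
        ⟨k + 1, show (M ^ (k + 1)) α = M ((M ^ k) α) by rw [pow_succ', Module.End.mul_apply]⟩
  | zero => simp
  | add x y _ _ hx hy => rw [map_add]; exact Submodule.add_mem _ hx hy
  | smul c x _ hx => rw [map_smul]; exact Submodule.smul_mem _ _ hx

/-- If `L = M + c • id` then every `L ^ n • α` lies in the cyclic span of `α` under `M`. -/
lemma aux_pow_mem_span (L M : V →ₗ[F] V) (c : F) (hLM : ∀ x, L x = M x + c • x) (α : V) (n : ℕ) :
    (L ^ n) α ∈ Submodule.span F (Set.range fun k : ℕ => (M ^ k) α) := by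
  induction n with
  | zero => exact Submodule.subset_span ⟨0, rfl⟩
  | succ n ih =>
      rw [pow_succ', Module.End.mul_apply, hLM]
      exact Submodule.add_mem _ (aux_span_pow_inv M α _ ih) (Submodule.smul_mem _ _ ih)

/-- There is a point `A ∈ E` such that the cyclic subspace
`⟨f A -ᵥ A⟩ = span {f.linearⁿ (f A -ᵥ A) : n ∈ ℕ}` has dimension exactly `τ(f)` and
is contained in the generalized eigenspace of `f.linear` for eigenvalue 1;
consequently the flat `A + ⟨f A -ᵥ A⟩` is an `f`-invariant flat through `A` of
dimension `τ(f)`. -/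
theorem exists_invariant_flat_of_dim_tau
    [FiniteDimensional F V] (f : E →ᵃ[F] E) :
    ∃ A : E,
      Module.finrank F
          (Submodule.span F (Set.range fun n : ℕ => (f.linear ^ n) (f A -ᵥ A)))
        = tauAff f ∧
      Submodule.span F (Set.range fun n : ℕ => (f.linear ^ n) (f A -ᵥ A)) ≤
        Module.End.maxGenEigenspace f.linear 1 ∧
      (∀ P ∈ (fun v : V => v +ᵥ A) ''
          (Submodule.span F (Set.range fun n : ℕ => (f.linear ^ n) (f A -ᵥ A)) : Set V),
        f P ∈ (fun v : V => v +ᵥ A) ''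
          (Submodule.span F (Set.range fun n : ℕ => (f.linear ^ n) (f A -ᵥ A)) : Set V)) := by
  classical
  set A₀ : E := Classical.arbitrary E with hA₀
  set L : V →ₗ[F] V := f.linear with hL
  set N : V →ₗ[F] V := L - LinearMap.id with hN
  set α₀ : V := f A₀ -ᵥ A₀ with hα₀
  set S : Set ℕ := {k : ℕ | α₀ ∈ LinearMap.range N ⊔ LinearMap.ker (N ^ k)} with hS
  have htau : tauAff f = sInf S := rfl
  -- `S` is nonempty, by the Fitting decomposition.
  have hSne : S.Nonempty := by
    obtain ⟨n, hn, hn1⟩ :=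
      (N.eventually_codisjoint_ker_pow_range_pow.and (Filter.eventually_ge_atTop 1)).exists
    refine ⟨n, ?_⟩
    have htop : LinearMap.ker (N ^ n) ⊔ LinearMap.range (N ^ n) = ⊤ := codisjoint_iff.mp hn
    have hle : LinearMap.range (N ^ n) ≤ LinearMap.range N := by
      rintro x ⟨y, rfl⟩
      refine ⟨(N ^ (n - 1)) y, ?_⟩
      have h2 : N * N ^ (n - 1) = N ^ n := by
        rw [← pow_succ']
        congr 1
        omega
      rw [← h2, Module.End.mul_apply]
    have : α₀ ∈ LinearMap.ker (N ^ n) ⊔ LinearMap.range (N ^ n) := htop ▸ Submodule.mem_top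
    rw [sup_comm] at this
    exact Submodule.mem_sup.mpr <| by
      obtain ⟨y, hy, z, hz, hyz⟩ := Submodule.mem_sup.mp this
      exact ⟨y, hle hy, z, hz, hyz⟩
  set t : ℕ := sInf S with htdef
  have htS : t ∈ S := Nat.sInf_mem hSne
  obtain ⟨y, hy, z, hz, hyz⟩ := Submodule.mem_sup.mp htS
  obtain ⟨w, rfl⟩ := hy
  -- The point `A` and the vector `α = f A -ᵥ A`.
  set A : E := (-w) +ᵥ A₀ with hA
  have hα : f A -ᵥ A = z := by
    rw [hA, f.map_vadd, vadd_vsub_assoc, vsub_vadd_eq_vsub_sub, ← hα₀, ← hyz, hN, map_neg]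
    simp only [LinearMap.sub_apply, LinearMap.id_apply]
    abel
  set α : V := f A -ᵥ A with hαdef
  have hzα : α = z := hα
  have hNt : (N ^ t) α = 0 := by rw [hzα]; exact hz
  -- N commutes with L
  have hcomm : Commute N L := (Commute.refl L).sub_left (Commute.one_left L)
  -- the two spans coincide
  set W : Submodule F V := Submodule.span F (Set.range fun n : ℕ => (L ^ n) α) with hW
  have hWle : W ≤ Submodule.span F (Set.range fun k : ℕ => (N ^ k) α) := by
    rw [hW, Submodule.span_le]
    rintro x ⟨n, rfl⟩
    exact aux_pow_mem_span L N 1 (fun x => by simp [hN, sub_add_cancel]) α n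
  have hWge : Submodule.span F (Set.range fun k : ℕ => (N ^ k) α) ≤ W := by
    rw [Submodule.span_le]
    rintro x ⟨n, rfl⟩
    exact aux_pow_mem_span N L (-1) (fun x => by simp [hN, sub_eq_add_neg]) α n
  have hWN : W = Submodule.span F (Set.range fun k : ℕ => (N ^ k) α) :=
    le_antisymm hWle hWge
  -- for k ≥ t, N^k α = 0
  have hNk : ∀ k, t ≤ k → (N ^ k) α = 0 := by
    intro k hk
    have : N ^ k = N ^ (k - t) * N ^ t := by rw [← pow_add]; congr 1; omega
    rw [this, Module.End.mul_apply, hNt, map_zero]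
  -- the span is spanned by N^j α, j < t
  have hWfin : W = Submodule.span F (Set.range fun j : Fin t => (N ^ (j : ℕ)) α) := by
    refine le_antisymm ?_ ?_
    · rw [hWN, Submodule.span_le]
      rintro x ⟨k, rfl⟩
      show (N ^ k) α ∈ _
      rcases lt_or_ge k t with hk | hk
      · exact Submodule.subset_span ⟨⟨k, hk⟩, rfl⟩
      · rw [hNk k hk]; exact Submodule.zero_mem _
    · rw [Submodule.span_le]
      rintro x ⟨j, rfl⟩
      rw [hWN]
      exact Submodule.subset_span ⟨(j : ℕ), rfl⟩
  -- the family N^j α, j < t, is linearly independent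
  have hNt1 : 0 < t → (N ^ (t - 1)) α ≠ 0 := by
    intro hpos hcontra
    have h1 : t - 1 ∉ S := Nat.notMem_of_lt_sInf (by omega)
    refine h1 (Submodule.mem_sup.mpr ⟨N w, ⟨w, rfl⟩, z, ?_, hyz⟩)
    rw [LinearMap.mem_ker, ← hzα]
    exact hcontra
  have hindep : LinearIndependent F (fun j : Fin t => (N ^ (j : ℕ)) α) := by
    rw [Fintype.linearIndependent_iff]
    intro g hg
    suffices h : ∀ n : ℕ, ∀ i : Fin t, (i : ℕ) = n → g i = 0 by
      intro i; exact h i i rfl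
    intro n
    induction n using Nat.strong_induction_on with
    | _ n ih =>
      rintro i rfl
      have hit : (i : ℕ) < t := i.2
      have happ := congrArg (N ^ (t - 1 - (i : ℕ))) hg
      rw [map_sum, map_zero] at happ
      have hterm : ∀ j : Fin t,
          (N ^ (t - 1 - (i : ℕ))) (g j • (N ^ (j : ℕ)) α)
            = g j • (N ^ (t - 1 - (i : ℕ) + (j : ℕ))) α := by
        intro j
        rw [map_smul, ← Module.End.mul_apply, ← pow_add]
      rw [Finset.sum_congr rfl fun j _ => hterm j] at happ
      rw [Finset.sum_eq_single i] at happ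
      · have : t - 1 - (i : ℕ) + (i : ℕ) = t - 1 := by omega
        rw [this] at happ
        rcases smul_eq_zero.mp happ with h | h
        · exact h
        · exact absurd h (hNt1 (by omega))
      · intro j _ hji
        rcases lt_or_ge (j : ℕ) (i : ℕ) with hj | hj
        · rw [ih (j : ℕ) hj j rfl, zero_smul]
        · have hj' : (i : ℕ) < (j : ℕ) := by
            rcases lt_or_eq_of_le hj with h' | h'
            · exact h'
            · exact absurd (Fin.ext h'.symm) hji
          rw [hNk _ (by omega), smul_zero]
      · intro h; exact absurd (Finset.mem_univ i) h
  -- W is invariant under L and contains α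
  have hWinv : ∀ x ∈ W, L x ∈ W := fun x hx => aux_span_pow_inv L α x hx
  have hαW : α ∈ W := Submodule.subset_span ⟨0, rfl⟩
  refine ⟨A, ?_, ?_, ?_⟩
  · -- dimension
    rw [htau, ← hαdef, ← hW, hWfin, finrank_span_eq_card hindep, Fintype.card_fin]
  · -- contained in the generalized eigenspace
    rw [← hαdef, Submodule.span_le]
    rintro x ⟨n, rfl⟩
    show (L ^ n) α ∈ _
    rw [SetLike.mem_coe, Module.End.mem_maxGenEigenspace]
    refine ⟨t, ?_⟩
    have h1 : L - (1 : F) • (1 : Module.End F V) = N := by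
      rw [hN]; ext x; simp
    rw [h1, ← Module.End.mul_apply, (hcomm.pow_pow t n), Module.End.mul_apply, hNt, map_zero]
  · -- invariance of the flat
    rintro P ⟨v, hv, rfl⟩
    rw [SetLike.mem_coe, ← hαdef, ← hW] at hv
    refine ⟨L v + α, ?_, ?_⟩
    · rw [SetLike.mem_coe, ← hαdef, ← hW]
      exact Submodule.add_mem _ (hWinv v hv) hαW
    · show (L v + α) +ᵥ A = f (v +ᵥ A)
      rw [f.map_vadd, hαdef, add_vadd, vsub_vadd]
end

section
/- Let (E, V) be an affine space over a field F with V finite-dimensional, and let f : E → E be an affine map. Then the invariance level of f equals τ(f): the minimum, over all nonempty affine subspaces s of E invariant under f (f maps s into s), of the dimension of the direction of s, is equal to τ(f). -/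
variable {F V E : Type*} [Field F] [AddCommGroup V] [Module F V] [AddTorsor V E]

lemma vsub_shift (f : E →ᵃ[F] E) (A O : E) :
    f A -ᵥ A = (f O -ᵥ O) + (f.linear - LinearMap.id : V →ₗ[F] V) (A -ᵥ O) := by
  have h : f.linear (A -ᵥ O) = f A -ᵥ f O := f.linearMap_vsub A O
  simp only [LinearMap.sub_apply, LinearMap.id_apply, h]
  have h2 : f A -ᵥ A = (f A -ᵥ f O) + ((f O -ᵥ O) + (O -ᵥ A)) := by
    rw [vsub_add_vsub_cancel, vsub_add_vsub_cancel]
  rw [h2, ← neg_vsub_eq_vsub_rev A O]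
  abel

lemma tau_set_shift (L : V →ₗ[F] V) (α v : V) (k : ℕ) :
    (α + (L - LinearMap.id : V →ₗ[F] V) v ∈
      LinearMap.range (L - LinearMap.id : V →ₗ[F] V) ⊔
        LinearMap.ker ((L - LinearMap.id : V →ₗ[F] V) ^ k)) ↔
    (α ∈ LinearMap.range (L - LinearMap.id : V →ₗ[F] V) ⊔
        LinearMap.ker ((L - LinearMap.id : V →ₗ[F] V) ^ k)) := by
  have hv : (L - LinearMap.id : V →ₗ[F] V) v ∈
      LinearMap.range (L - LinearMap.id : V →ₗ[F] V) ⊔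
        LinearMap.ker ((L - LinearMap.id : V →ₗ[F] V) ^ k) :=
    Submodule.mem_sup_left (LinearMap.mem_range_self _ _)
  constructor
  · intro h
    have := Submodule.sub_mem _ h hv
    simpa using this
  · intro h
    exact Submodule.add_mem _ h hv

lemma tau_shift (L : V →ₗ[F] V) (α v : V) :
    tau L (α + (L - LinearMap.id : V →ₗ[F] V) v) = tau L α := by
  unfold tau
  congr 1
  ext k
  exact tau_set_shift L α v k

lemma tauAff_eq (f : E →ᵃ[F] E) (A : E) : tauAff f = tau f.linear (f A -ᵥ A) := by
  rw [tauAff, vsub_shift f A (Classical.arbitrary E), tau_shift]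

/-- The defining set of `tau` is nonempty in finite dimension. -/
lemma tau_set_nonempty [FiniteDimensional F V] (L : V →ₗ[F] V) (α : V) :
    {k : ℕ | α ∈ LinearMap.range (L - LinearMap.id : V →ₗ[F] V) ⊔
      LinearMap.ker ((L - LinearMap.id : V →ₗ[F] V) ^ k)}.Nonempty := by
  set N : V →ₗ[F] V := L - LinearMap.id with hN
  obtain ⟨n, hn⟩ := Filter.eventually_atTop.mp N.eventually_codisjoint_ker_pow_range_pow
  refine ⟨n + 1, ?_⟩
  have h1 : Codisjoint (LinearMap.ker (N ^ (n+1))) (LinearMap.range (N ^ (n+1))) :=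
    hn (n+1) (Nat.le_succ n)
  have h2 : LinearMap.range (N ^ (n+1)) ≤ LinearMap.range N := by
    rw [pow_succ']
    exact LinearMap.range_comp_le_range _ _
  have h3 : LinearMap.range N ⊔ LinearMap.ker (N ^ (n+1)) = ⊤ := by
    rw [eq_top_iff, ← codisjoint_iff.mp h1]
    exact sup_le (le_sup_right) (le_sup_of_le_left h2)
  show α ∈ LinearMap.range N ⊔ LinearMap.ker (N ^ (n+1))
  rw [h3]
  trivial

lemma tau_le_finrank_direction [FiniteDimensional F V] (f : E →ᵃ[F] E)
    (s : AffineSubspace F E) (hne : (s : Set E).Nonempty)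
    (hinv : ∀ P ∈ s, f P ∈ s) :
    tauAff f ≤ Module.finrank F s.direction := by
  classical
  obtain ⟨A, hA⟩ := hne
  set N : V →ₗ[F] V := f.linear - LinearMap.id with hNdef
  set W : Submodule F V := s.direction with hW
  set k : ℕ := Module.finrank F W with hk
  -- α ∈ W
  have hα : f A -ᵥ A ∈ W := AffineSubspace.vsub_mem_direction (hinv A hA) hA
  -- N maps W into W
  have hLW : ∀ w ∈ W, f.linear w ∈ W := by
    intro w hw
    have h1 : f.linear w = f (w +ᵥ A) -ᵥ f A := by
      rw [← f.linearMap_vsub, vadd_vsub]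
    rw [h1]
    exact AffineSubspace.vsub_mem_direction (hinv _ (AffineSubspace.vadd_mem_of_mem_direction hw hA)) (hinv A hA)
  have hNW : ∀ w ∈ W, N w ∈ W := by
    intro w hw
    have : N w = f.linear w - w := by simp [hNdef]
    rw [this]
    exact Submodule.sub_mem _ (hLW w hw) hw
  set g : W →ₗ[F] W := N.restrict hNW with hg
  obtain ⟨n₀, hn₀⟩ := Filter.eventually_atTop.mp g.eventually_codisjoint_ker_pow_range_pow
  set n : ℕ := max (max n₀ k) 1 with hn
  have hcod : Codisjoint (LinearMap.ker (g ^ n)) (LinearMap.range (g ^ n)) :=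
    hn₀ n (le_trans (le_max_left _ _) (le_max_left _ _))
  set w : W := ⟨f A -ᵥ A, hα⟩ with hwdef
  have hwmem : w ∈ LinearMap.ker (g ^ n) ⊔ LinearMap.range (g ^ n) := by
    rw [codisjoint_iff.mp hcod]; trivial
  obtain ⟨u, hu, v, hv, huv⟩ := Submodule.mem_sup.mp hwmem
  -- u is in ker (g ^ k)
  have huk : u ∈ LinearMap.ker (g ^ k) := by
    have h1 : LinearMap.ker (g ^ n) = LinearMap.ker (g ^ Module.finrank F W) :=
      Module.End.ker_pow_eq_ker_pow_finrank_of_le (le_trans (le_max_right _ _) (le_max_left _ _))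
    rw [h1] at hu
    exact hu
  -- hence (N ^ k) u.val = 0
  have hpow : ∀ m : ℕ, ∀ x : W, ((g ^ m) x : V) = (N ^ m) (x : V) := by
    intro m x
    rw [Module.End.pow_restrict m hNW]
    rfl
  have huker : (u : V) ∈ LinearMap.ker (N ^ k) := by
    have : (g ^ k) u = 0 := huk
    have h2 := hpow k u
    rw [this] at h2
    simpa using h2.symm
  -- v.val ∈ range N
  have hvr : (v : V) ∈ LinearMap.range N := by
    obtain ⟨x, hx⟩ := hv
    have hn1 : 1 ≤ n := le_max_right _ _
    obtain ⟨m, hm⟩ : ∃ m, n = m + 1 := ⟨n - 1, by omega⟩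
    refine ⟨((g ^ m) x : V), ?_⟩
    rw [hm] at hx
    have : (g ^ (m+1)) x = g ((g ^ m) x) := by rw [pow_succ']; rfl
    rw [this] at hx
    have h3 : (g ((g ^ m) x) : V) = N ((g ^ m) x : V) := by
      rw [hg]; exact LinearMap.restrict_coe_apply _ _ _
    rw [← h3, hx]
  have hfinal : f A -ᵥ A ∈ LinearMap.range N ⊔ LinearMap.ker (N ^ k) := by
    have heq : f A -ᵥ A = (u : V) + (v : V) := by
      have h5 := congrArg (Subtype.val) huv
      exact h5.symm
    rw [heq]
    exact Submodule.add_mem _ (Submodule.mem_sup_right huker) (Submodule.mem_sup_left hvr)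
  rw [tauAff_eq f A]
  exact Nat.sInf_le hfinal

/-- The invariance level of `f` equals `τ(f)`: `τ(f)` is the minimum,
over all nonempty `f`-invariant affine subspaces `s` of `E`, of the dimension of the
direction of `s`. -/
theorem invariance_level_eq_tau
    [FiniteDimensional F V] (f : E →ᵃ[F] E) :
    IsLeast {k : ℕ | ∃ s : AffineSubspace F E, (s : Set E).Nonempty ∧
        (∀ P ∈ s, f P ∈ s) ∧ Module.finrank F s.direction = k}
      (tauAff f) := by
  classical
  set N : V →ₗ[F] V := f.linear - LinearMap.id with hNdef
  set O : E := Classical.arbitrary E with hO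
  set t : ℕ := tauAff f with ht
  constructor
  · -- membership: construct an invariant flat of dimension exactly t
    have htmem : (f O -ᵥ O) ∈ LinearMap.range N ⊔ LinearMap.ker (N ^ t) :=
      Nat.sInf_mem (tau_set_nonempty f.linear (f O -ᵥ O))
    obtain ⟨x, hx, y, hy, hxy⟩ := Submodule.mem_sup.mp htmem
    obtain ⟨v, rfl⟩ := hx
    set B : E := (-v) +ᵥ O with hB
    have hβ : f B -ᵥ B = y := by
      rw [vsub_shift f B O, ← hxy, hB, vadd_vsub]
      have : N (-v) = -(N v) := by simp
      rw [this]; abel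
    set W : Submodule F V := Submodule.span F (Set.range fun i : Fin t => (N ^ (i : ℕ)) y)
      with hWdef
    have hyW : y ∈ W := by
      rcases Nat.eq_zero_or_pos t with h0 | hpos
      · have : y = 0 := by
          rw [h0] at hy
          simpa using hy
        rw [this]; exact Submodule.zero_mem _
      · exact Submodule.subset_span ⟨⟨0, hpos⟩, by simp⟩
    have hNW : ∀ w ∈ W, N w ∈ W := by
      intro w hw
      induction hw using Submodule.span_induction with
      | mem z hz =>
        obtain ⟨i, rfl⟩ := hz
        rcases Nat.lt_or_ge ((i : ℕ) + 1) t with hlt | hge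
        · apply Submodule.subset_span
          refine ⟨⟨(i : ℕ) + 1, hlt⟩, ?_⟩
          show (N ^ ((i : ℕ) + 1)) y = N ((N ^ (i : ℕ)) y)
          rw [pow_succ', Module.End.mul_apply]
        · have hi1 : (i : ℕ) + 1 = t ∨ t ≤ (i : ℕ) := by omega
          have hzero : N ((N ^ (i : ℕ)) y) = 0 := by
            have h1 : N ((N ^ (i : ℕ)) y) = (N ^ ((i : ℕ) + 1)) y := by
              rw [pow_succ']; rfl
            have h2 : ((i : ℕ) + 1) = ((i : ℕ) + 1 - t) + t := by omega
            rw [h1, h2, pow_add, Module.End.mul_apply, LinearMap.mem_ker.mp hy, map_zero]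
          rw [hzero]; exact Submodule.zero_mem _
      | zero => simpa using Submodule.zero_mem W
      | add a b _ _ ha hb => rw [map_add]; exact Submodule.add_mem _ ha hb
      | smul c a _ ha => rw [map_smul]; exact Submodule.smul_mem _ _ ha
    -- the flat
    set sflat : AffineSubspace F E := AffineSubspace.mk' B W with hs
    have hBmem : B ∈ sflat := AffineSubspace.self_mem_mk' B W
    have hinv : ∀ P ∈ sflat, f P ∈ sflat := by
      intro P hP
      rw [AffineSubspace.mem_mk'] at hP ⊢
      have h1 : f P -ᵥ B = f.linear (P -ᵥ B) + (f B -ᵥ B) := by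
        rw [f.linearMap_vsub, vsub_add_vsub_cancel]
      have h2 : f.linear (P -ᵥ B) = (P -ᵥ B) + N (P -ᵥ B) := by
        simp [hNdef]
      rw [h1, h2, hβ]
      exact Submodule.add_mem _ (Submodule.add_mem _ hP (hNW _ hP)) hyW
    have hdim_le : Module.finrank F W ≤ t := by
      refine le_trans (finrank_span_le_card _) ?_
      rw [Set.toFinset_range]
      exact le_trans (Finset.card_image_le) (by simp)
    have hdim_ge : t ≤ Module.finrank F W := by
      have := tau_le_finrank_direction f sflat ⟨B, hBmem⟩ hinv
      rwa [AffineSubspace.direction_mk'] at this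
    exact ⟨sflat, ⟨B, hBmem⟩, hinv, by rw [AffineSubspace.direction_mk']; omega⟩
  · rintro k ⟨s, hne, hinv, hdim⟩
    rw [← hdim]
    exact tau_le_finrank_direction f s hne hinv
end
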